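/- Let i, j ∈ ℕ with j > i and set (r, r′) = (−ρ−i, −ρ′−j). Then every admissible solution t for (r, r′) satisfies t(α, α′) = 0 whenever α ≤ i or α′ > j. -/

import Mathlib

noncomputable section

/-- ρ = (n-1)/2 as a complex number. -/
def rho (n : ℕ) : ℂ := ((n : ℂ) - 1) / 2

/-- ρ' = (n-2)/2 as a complex number. -/
def rho' (n : ℕ) : ℂ := ((n : ℂ) - 2) / 2

/-- A diagonal sequence for `(r, r')`. -/
def IsDiagSeq (n : ℕ) (r r' : ℂ) (s : ℕ → ℂ) : Prop :=
  ∀ α : ℕ, (2*r' + 2*(α : ℂ) + (n : ℂ) - 2) * s α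
    = (2*r + 2*(α : ℂ) + (n : ℂ) - 1) * s (α + 1)

/-- L_even. -/
def Leven (n : ℕ) : Set (ℂ × ℂ) :=
  {p | ∃ i j : ℕ, p.1 = -rho n - (i : ℂ) ∧ p.2 = -rho' n - (j : ℂ) ∧ ∃ k : ℕ, i = j + 2*k}

/-- L_odd. -/
def Lodd (n : ℕ) : Set (ℂ × ℂ) :=
  {p | ∃ i j : ℕ, p.1 = -rho n - (i : ℂ) ∧ p.2 = -rho' n - (j : ℂ) ∧ ∃ k : ℕ, i = j + 2*k + 1}

/-- An admissible solution `t : ℕ × ℕ → ℂ` for `(r, r')`: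
`t(α,α') = 0` when `α' > α` or `α − α'` is odd (equivalently `α + α'` is odd),
and the relations (R1), (R2) hold for all `α ≥ α'` with `α − α'` even.
The natural-subtraction index `α - 1` is harmless, since in (R1) its coefficient
`(α − α')` vanishes when `α = α'`, and in (R2) we have `α ≥ α' ≥ 1`. -/
def IsAdmissible (n : ℕ) (r r' : ℂ) (t : ℕ → ℕ → ℂ) : Prop :=
  (∀ α α' : ℕ, (α < α' ∨ Odd (α + α')) → t α α' = 0) ∧
  (∀ α α' : ℕ, α' ≤ α → Even (α + α') →
    ((2*(α : ℂ) + (n : ℂ) - 2) * (2*r' + 2*(α' : ℂ) + (n : ℂ) - 2) * t α α'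
      = ((α : ℂ) + (α' : ℂ) + (n : ℂ) - 2) * (2*r + 2*(α : ℂ) + (n : ℂ) - 1)
          * t (α + 1) (α' + 1)
        + ((α : ℂ) - (α' : ℂ)) * (2*r - 2*(α : ℂ) - (n : ℂ) + 3)
          * t (α - 1) (α' + 1)) ∧
    (1 ≤ α' →
      (2*(α : ℂ) + (n : ℂ) - 2) * (2*r' - 2*(α' : ℂ) - (n : ℂ) + 4) * t α α'
      = ((α : ℂ) - (α' : ℂ) + 1) * (2*r + 2*(α : ℂ) + (n : ℂ) - 1)
          * t (α + 1) (α' - 1)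
        + ((α : ℂ) + (α' : ℂ) + (n : ℂ) - 3) * (2*r - 2*(α : ℂ) - (n : ℂ) + 3)
          * t (α - 1) (α' - 1)))

/-!
At `(r, r') = (-ρ - i, -ρ' - j)` the coefficients of (R1) and (R2) factor:
`2r + 2α + n - 1 = 2(α - i)`, `2r' + 2α' + n - 2 = 2(α' - j)`,
`2r - 2α - n + 3 = -2(α + i + n - 2)` and `2r' - 2α' - n + 4 = -2(α' + j + n - 3)`.

For `α ≤ i`, (R1) expresses `(α' - j) t(α, α')` through values with larger `α'` and first index
still at most `i` (the one leaving this region carries the factor `α - i`, which vanishes at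
`α = i`); since `α' ≤ α ≤ i < j`, downward induction on `α'` gives `t(α, α') = 0`.

For `α' > j`, (R1) on the diagonal reads `(2α+n-2)(α - j) t(α, α) = (2α+n-2)(α - i) t(α+1, α+1)`;
its left side vanishes at `α = j`, so `t(α, α) = 0` for all `α > j`. Relation (R2) at `(α, α' + 1)`
expresses `(α - α')(α - i) t(α + 1, α')` through `t(α, α' + 1)` and `t(α - 1, α')`, which pushes
the vanishing down each column `α' > j`.
-/

section Lattice

variable {n i j : ℕ} {t : ℕ → ℕ → ℂ}

lemma two_mul_add_sub_two_ne_zero (hn : 3 ≤ n) (α : ℕ) : (2 * (α : ℂ) + n - 2) ≠ 0 := by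
  rw [show (2 * (α : ℂ) + n - 2) = ((2 * α + n - 2 : ℕ) : ℂ) by
    push_cast [show 2 ≤ 2 * α + n by omega]; ring]
  exact_mod_cast (by omega : 2 * α + n - 2 ≠ 0)

lemma natCast_sub_natCast_ne_zero {a b : ℕ} (h : a ≠ b) : ((a : ℂ) - b) ≠ 0 :=
  sub_ne_zero.mpr (by exact_mod_cast h)

namespace IsAdmissible

variable (ht : IsAdmissible n (-rho n - i) (-rho' n - j) t)
include ht

lemma r1_factored {α α' : ℕ} (hle : α' ≤ α) (hev : Even (α + α')) :
    (2 * (α : ℂ) + n - 2) * (α' - j) * t α α'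
      = (α + α' + n - 2) * (α - i) * t (α + 1) (α' + 1)
        - (α - α') * (α + i + n - 2) * t (α - 1) (α' + 1) := by
  have h := (ht.2 α α' hle hev).1
  simp only [rho, rho'] at h
  linear_combination h / 2

lemma r2_factored {α α' : ℕ} (hlt : α' < α) (hodd : Odd (α + α')) :
    (2 * (α : ℂ) + n - 2) * (α' + j + n - 2) * t α (α' + 1)
      = -((α - α') * (α - i) * t (α + 1) α')
        + (α + α' + n - 2) * (α + i + n - 2) * t (α - 1) α' := by
  have h := (ht.2 α (α' + 1) hlt (by rw [← add_assoc]; exact hodd.add_one)).2 le_add_self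
  simp only [rho, rho', Nat.add_sub_cancel] at h
  push_cast at h
  linear_combination -h / 2

lemma eq_zero_of_le_left (hn : 3 ≤ n) (hij : i < j) {α α' : ℕ} (hα : α ≤ i) :
    t α α' = 0 := by
  rcases lt_or_ge α α' with hlt | hle
  · exact ht.1 α α' (Or.inl hlt)
  rcases Nat.even_or_odd (α + α') with hev | hodd
  swap
  · exact ht.1 α α' (Or.inr hodd)
  have hup : ((α : ℂ) - i) * t (α + 1) (α' + 1) = 0 := by
    rcases hα.lt_or_eq with hlt | rfl
    · rw [eq_zero_of_le_left hn hij hlt, mul_zero]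
    · rw [sub_self, zero_mul]
  have hdown : t (α - 1) (α' + 1) = 0 := eq_zero_of_le_left hn hij (by omega)
  have h : (2 * (α : ℂ) + n - 2) * (α' - j) * t α α' = 0 := by
    rw [ht.r1_factored hle hev, hdown]
    linear_combination (↑α + ↑α' + ↑n - 2 : ℂ) * hup
  exact (mul_eq_zero.mp h).resolve_left
    (mul_ne_zero (two_mul_add_sub_two_ne_zero hn α) (natCast_sub_natCast_ne_zero (by omega)))
termination_by i + 1 - α'

lemma diag_eq_zero (hn : 3 ≤ n) (hij : i < j) {α : ℕ} (hα : j < α) : t α α = 0 := by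
  have hstep : ∀ α, α ≠ i → ((α : ℂ) - j) * t α α = 0 → t (α + 1) (α + 1) = 0 := by
    intro α hαi h
    have h' : (2 * (α : ℂ) + n - 2) * (α - i) * t (α + 1) (α + 1) = 0 := by
      linear_combination -ht.r1_factored (le_refl α) ⟨α, rfl⟩ + (2 * (α : ℂ) + n - 2) * h
    exact (mul_eq_zero.mp h').resolve_left
      (mul_ne_zero (two_mul_add_sub_two_ne_zero hn α) (natCast_sub_natCast_ne_zero hαi))
  induction α, hα using Nat.le_induction with
  | base => exact hstep j hij.ne' (by rw [sub_self, zero_mul])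
  | succ α hα ih => exact hstep α (by omega) (by rw [ih, mul_zero])

lemma eq_zero_of_lt_right (hn : 3 ≤ n) (hij : i < j) {α α' : ℕ} (hα' : j < α') :
    t α α' = 0 := by
  rcases lt_or_ge α α' with hlt | hle
  · exact ht.1 α α' (Or.inl hlt)
  rcases Nat.even_or_odd (α + α') with ⟨k, hk⟩ | hodd
  swap
  · exact ht.1 α α' (Or.inr hodd)
  obtain ⟨m, rfl⟩ : ∃ m, α = α' + 2 * m := ⟨k - α', by omega⟩
  clear hle hk k
  induction m generalizing α' with
  | zero => exact ht.diag_eq_zero hn hij hα'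
  | succ m ih =>
    have h := ht.r2_factored (α := α' + 2 * m + 1) (α' := α') (by omega) ⟨α' + m, by ring⟩
    rw [show α' + 2 * m + 1 = α' + 1 + 2 * m by ring, ih (by omega),
      show α' + 1 + 2 * m - 1 = α' + 2 * m by omega, ih hα',
      show α' + 1 + 2 * m + 1 = α' + 2 * (m + 1) by ring] at h
    simp only [mul_zero, add_zero, zero_eq_neg] at h
    refine (mul_eq_zero.mp h).resolve_left (mul_ne_zero ?_ (natCast_sub_natCast_ne_zero ?_))
    · exact natCast_sub_natCast_ne_zero (by omega)
    · omega

end IsAdmissible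

end Lattice

theorem statement12 (n : ℕ) (hn : 3 ≤ n) (i j : ℕ) (hij : i < j) (r r' : ℂ)
    (hr : r = -rho n - (i : ℂ)) (hr' : r' = -rho' n - (j : ℂ)) :
    ∀ t : ℕ → ℕ → ℂ, IsAdmissible n r r' t →
      ∀ α α' : ℕ, (α ≤ i ∨ j < α') → t α α' = 0 := by
  subst hr hr'
  rintro t ht α α' (hα | hα')
  · exact ht.eq_zero_of_le_left hn hij hα
  · exact ht.eq_zero_of_lt_right hn hij hα'

end
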